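/- arXiv:2207.11758 — 3 statements merged into one kernel-verified Lean document; each statement's English description precedes it below -/
import Mathlib

section
/- There exist absolute constants C > 0 and y₀ such that for all integers y ≥ y₀, H ≥ 1, and k with 1 ≤ k ≤ log log y, the number N_k(H; y) of integer tuples (h₁, h₂, …, h_k) ∈ ([−H, H] ∩ ℤ)^k with y | h₁h₂⋯h_k and h₁h₂⋯h_k ≠ 0 satisfies N_k(H; y) ≤ C · (2H)^k · H^{C·k·log k / log log y} / y, where log denotes the natural logarithm. -/
/-!
A tuple counted by `N_k(H; y)` admits a factorisation `y = d₁⋯d_k` with `dᵢ ∣ hᵢ`, and for a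
fixed factorisation there are at most `∏ᵢ 2H/dᵢ = (2H)^k / y` such tuples. Hence
`N_k(H; y) ≤ τ_k(y) (2H)^k / y`, where `τ_k(y)` counts the ordered factorisations of `y` into
`k` factors. Counting exponent vectors prime by prime, a prime `p < T` contributes a factor at
most `(log₂ y + 1)^(k-1)` to `τ_k(y)` and a prime `p ≥ T` a factor at most `k^(v_p y)`, where
`∑_{p ≥ T} v_p y ≤ log_T y`. The choice `T = ⌈√(log y)⌉` gives
`τ_k(y) ≤ y^(3 log k / log log y)` for `k ≤ log log y` and large `y`, and `y ≤ H^k` (otherwise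
`N_k(H; y) = 0`) turns this into `H^(3 k log k / log log y)`.
-/

/-- `N_k(H; y)`: the number of integer tuples `(h₁,…,h_k) ∈ ([−H,H] ∩ ℤ)^k`
with `y ∣ h₁⋯h_k` and `h₁⋯h_k ≠ 0`. -/
noncomputable def NkHy (k H y : ℕ) : ℕ :=
  Nat.card {h : Fin k → ℤ //
    (∀ i, h i ∈ Finset.Icc (-(H : ℤ)) (H : ℤ)) ∧ (y : ℤ) ∣ ∏ i, h i ∧ (∏ i, h i) ≠ 0}

open Finset Real Filter

theorem exists_prod_eq_and_dvd_of_dvd_prod {α : Type*} [CommMonoid α] [DecompositionMonoid α]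
    [Subsingleton αˣ] :
    ∀ {k : ℕ} {a : α} {f : Fin k → α}, a ∣ ∏ i, f i →
      ∃ d : Fin k → α, ∏ i, d i = a ∧ ∀ i, d i ∣ f i
  | 0, _, _, h => ⟨finZeroElim, by
      rw [Fin.prod_univ_zero]
      exact (isUnit_iff_eq_one.mp (isUnit_of_dvd_one (by simpa using h))).symm, finZeroElim⟩
  | k + 1, a, f, h => by
    rw [Fin.prod_univ_succ] at h
    obtain ⟨a₀, a', h₀, h', rfl⟩ := exists_dvd_and_dvd_of_dvd_mul h
    obtain ⟨d, hd, hdf⟩ := exists_prod_eq_and_dvd_of_dvd_prod h'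
    exact ⟨Fin.cons a₀ d, by rw [Fin.prod_univ_succ]; simp [hd], Fin.cases h₀ hdf⟩

theorem Int.exists_mem_finMulAntidiag_dvd {k y : ℕ} {h : Fin k → ℤ} (hy : y ≠ 0)
    (hdvd : (y : ℤ) ∣ ∏ i, h i) : ∃ d ∈ Nat.finMulAntidiag k y, ∀ i, (d i : ℤ) ∣ h i := by
  rw [Int.natCast_dvd, show (∏ i, h i).natAbs = ∏ i, (h i).natAbs from
    map_prod Int.natAbsHom h univ] at hdvd
  obtain ⟨d, hd, hdh⟩ := exists_prod_eq_and_dvd_of_dvd_prod hdvd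
  exact ⟨d, Nat.mem_finMulAntidiag.mpr ⟨hd, hy⟩, fun i => Int.natCast_dvd.mpr (hdh i)⟩

theorem Int.card_filter_dvd_Icc_le (H m : ℕ) :
    #{x ∈ Icc (-(H : ℤ)) H | (m : ℤ) ∣ x ∧ x ≠ 0} ≤ 2 * (H / m) := by
  set S := {n ∈ Ioc 0 H | m ∣ n}
  calc #{x ∈ Icc (-(H : ℤ)) H | (m : ℤ) ∣ x ∧ x ≠ 0}
      ≤ #(S.image (fun n : ℕ => (n : ℤ)) ∪ S.image (fun n : ℕ => -(n : ℤ))) := by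
        refine card_le_card fun x hx => ?_
        simp only [mem_filter, mem_Icc] at hx
        obtain ⟨⟨hxl, hxu⟩, hmx, hx0⟩ := hx
        have hxS : x.natAbs ∈ S := by
          simp only [S, mem_filter, mem_Ioc]
          exact ⟨⟨Int.natAbs_pos.mpr hx0, by omega⟩, Int.natCast_dvd.mp hmx⟩
        rcases Int.natAbs_eq x with hx | hx
        · exact mem_union_left _ (mem_image.mpr ⟨_, hxS, hx.symm⟩)
        · exact mem_union_right _ (mem_image.mpr ⟨_, hxS, hx.symm⟩)
    _ ≤ #S + #S := (card_union_le _ _).trans (add_le_add card_image_le card_image_le)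
    _ = 2 * (H / m) := by rw [Nat.Ioc_filter_dvd_card_eq_div]; ring

theorem NkHy_eq_card (k H y : ℕ) :
    NkHy k H y = #{h ∈ Fintype.piFinset fun _ : Fin k => Icc (-(H : ℤ)) H |
      (y : ℤ) ∣ ∏ i, h i ∧ ∏ i, h i ≠ 0} := by
  rw [NkHy, ← Nat.card_eq_finsetCard]
  exact Nat.card_congr (Equiv.subtypeEquivRight fun h => by simp)

theorem NkHy_eq_zero_of_pow_lt {k H y : ℕ} (hy : H ^ k < y) : NkHy k H y = 0 := by
  rw [NkHy_eq_card, card_eq_zero, filter_eq_empty_iff]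
  rintro h hbox ⟨hdvd, hne⟩
  have hprod : (∏ i, h i).natAbs ≤ H ^ k := by
    rw [show (∏ i, h i).natAbs = ∏ i, (h i).natAbs from map_prod Int.natAbsHom h univ]
    simpa using prod_le_pow_card univ (fun i => (h i).natAbs) H fun i _ => by
      have := mem_Icc.mp (Fintype.mem_piFinset.mp hbox i); omega
  have := Nat.le_of_dvd (Int.natAbs_pos.mpr hne) (Int.natCast_dvd.mp hdvd)
  omega

theorem NkHy_le_card_finMulAntidiag {k H y : ℕ} (hy : y ≠ 0) :
    (NkHy k H y : ℝ) ≤ #(Nat.finMulAntidiag k y) * (2 * H) ^ k / y := by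
  set B : ℕ → Finset ℤ := fun m => {x ∈ Icc (-(H : ℤ)) H | (m : ℤ) ∣ x ∧ x ≠ 0}
  have hcover : {h ∈ Fintype.piFinset fun _ : Fin k => Icc (-(H : ℤ)) H |
      (y : ℤ) ∣ ∏ i, h i ∧ ∏ i, h i ≠ 0} ⊆
      (Nat.finMulAntidiag k y).biUnion fun d => Fintype.piFinset fun i => B (d i) := by
    intro h hh
    simp only [mem_filter, Fintype.mem_piFinset] at hh
    obtain ⟨hbox, hdvd, hne⟩ := hh
    obtain ⟨d, hd, hdh⟩ := Int.exists_mem_finMulAntidiag_dvd hy hdvd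
    refine mem_biUnion.mpr ⟨d, hd, Fintype.mem_piFinset.mpr fun i => mem_filter.mpr
      ⟨hbox i, hdh i, fun h0 => hne (prod_eq_zero (mem_univ i) h0)⟩⟩
  have hB (d : Fin k → ℕ) (hd : d ∈ Nat.finMulAntidiag k y) :
      (#(Fintype.piFinset fun i => B (d i)) : ℝ) ≤ (2 * H) ^ k / y := by
    rw [Fintype.card_piFinset, Nat.cast_prod, ← Nat.prod_eq_of_mem_finMulAntidiag hd,
      Nat.cast_prod, ← Fin.prod_const, ← prod_div_distrib]
    refine prod_le_prod (fun i _ => by positivity) fun i _ => ?_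
    calc (#(B (d i)) : ℝ) ≤ ((2 * (H / d i) : ℕ) : ℝ) := by
          exact_mod_cast Int.card_filter_dvd_Icc_le H (d i)
      _ ≤ 2 * H / d i := by
          rw [Nat.cast_mul, mul_div_assoc]
          exact mul_le_mul_of_nonneg_left Nat.cast_div_le (by norm_num)
  calc (NkHy k H y : ℝ) ≤ #((Nat.finMulAntidiag k y).biUnion
        fun d => Fintype.piFinset fun i => B (d i)) := by
        rw [NkHy_eq_card]; exact_mod_cast card_le_card hcover
    _ ≤ ∑ d ∈ Nat.finMulAntidiag k y, (#(Fintype.piFinset fun i => B (d i)) : ℝ) := by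
        exact_mod_cast card_biUnion_le
    _ ≤ ∑ _d ∈ Nat.finMulAntidiag k y, (2 * H : ℝ) ^ k / y := sum_le_sum hB
    _ = #(Nat.finMulAntidiag k y) * (2 * H) ^ k / y := by
        rw [sum_const, nsmul_eq_mul, mul_div_assoc]

theorem Finset.card_piAntidiag_univ {ι : Type*} [Fintype ι] [DecidableEq ι] (n : ℕ) :
    #(piAntidiag (univ : Finset ι) n) = (Fintype.card ι).multichoose n := by
  rw [← map_sym_eq_piAntidiag, card_map, sym_univ, card_univ, Sym.card_sym_eq_multichoose]

theorem Nat.multichoose_le_pow (n k : ℕ) : n.multichoose k ≤ n ^ k := by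
  rcases n.eq_zero_or_pos with rfl | hn
  · cases k <;> simp
  · rw [Nat.multichoose_eq]
    exact (Nat.choose_le_sub_pow _ _).trans (Nat.pow_le_pow_left (by omega) k)

theorem Nat.multichoose_le_succ_pow (n k : ℕ) : n.multichoose k ≤ (k + 1) ^ (n - 1) := by
  rcases n with _ | n
  · cases k <;> simp
  · rw [Nat.multichoose_eq, show n + 1 + k - 1 = n + k by omega, ← Nat.choose_symm_add]
    exact (Nat.choose_le_sub_pow _ _).trans (Nat.pow_le_pow_left (by omega) n)

theorem Nat.card_finMulAntidiag_le_prod_multichoose (k y : ℕ) :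
    #(Nat.finMulAntidiag k y) ≤ ∏ p ∈ y.primeFactors, k.multichoose (y.factorization p) := by
  have hcard :
      #(y.primeFactors.pi fun p => piAntidiag (univ : Finset (Fin k)) (y.factorization p)) =
        ∏ p ∈ y.primeFactors, k.multichoose (y.factorization p) := by
    simp [card_piAntidiag_univ]
  rw [← hcard]
  refine card_le_card_of_injOn (fun d p _ i => (d i).factorization p) (fun d hd => ?_) ?_
  · have hd0 (i : Fin k) : d i ≠ 0 := Nat.ne_zero_of_mem_finMulAntidiag hd i
    refine Finset.mem_pi.mpr fun p _ => mem_piAntidiag.mpr ⟨?_, fun _ _ => mem_univ _⟩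
    show ∑ i, (d i).factorization p = y.factorization p
    rw [← Finsupp.finsetSum_apply, ← Nat.factorization_prod fun i _ => hd0 i,
      Nat.prod_eq_of_mem_finMulAntidiag hd]
  · intro d hd d' hd' hdd'
    funext i
    refine Nat.eq_of_factorization_eq (Nat.ne_zero_of_mem_finMulAntidiag hd i)
      (Nat.ne_zero_of_mem_finMulAntidiag hd' i) fun p => ?_
    by_cases hp : p ∈ y.primeFactors
    · exact congrFun (congrFun (congrFun hdd' p) hp) i
    · have hyp : y.factorization p = 0 := by
        rwa [← Nat.support_factorization, Finsupp.notMem_support_iff] at hp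
      have hzero {e : Fin k → ℕ} (he : e ∈ Nat.finMulAntidiag k y) : (e i).factorization p = 0 :=
        Nat.eq_zero_of_le_zero <| hyp ▸ (Nat.factorization_le_iff_dvd
          (Nat.ne_zero_of_mem_finMulAntidiag he i) (Nat.mem_finMulAntidiag.mp he).2).mpr
          (Nat.dvd_of_mem_finMulAntidiag he i) p
      rw [hzero hd, hzero hd']

theorem Nat.factorization_le_log_two (y p : ℕ) : y.factorization p ≤ Nat.log 2 y := by
  rcases eq_or_ne y 0 with rfl | hy
  · simp
  by_cases hp : p.Prime
  · exact Nat.le_log_of_pow_le one_lt_two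
      ((Nat.pow_le_pow_left hp.two_le _).trans (Nat.ordProj_le p hy))
  · simp [Nat.factorization_eq_zero_of_not_prime y hp]

theorem Nat.sum_factorization_filter_le_le_log {y T : ℕ} (hy : y ≠ 0) (hT : 1 < T) :
    ∑ p ∈ y.primeFactors with T ≤ p, y.factorization p ≤ Nat.log T y := by
  refine Nat.le_log_of_pow_le hT ?_
  calc T ^ ∑ p ∈ y.primeFactors with T ≤ p, y.factorization p
      = ∏ p ∈ y.primeFactors with T ≤ p, T ^ y.factorization p :=
        (prod_pow_eq_pow_sum _ _ _).symm
    _ ≤ ∏ p ∈ y.primeFactors with T ≤ p, p ^ y.factorization p :=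
        prod_le_prod' fun p hp => Nat.pow_le_pow_left (mem_filter.mp hp).2 _
    _ ≤ ∏ p ∈ y.primeFactors, p ^ y.factorization p :=
        prod_le_prod_of_subset_of_one_le' (filter_subset _ _) fun p hp _ =>
          Nat.one_le_pow _ _ (Nat.prime_of_mem_primeFactors hp).pos
    _ = y := (Nat.prod_primeFactors_pow_factorization hy).symm

theorem Nat.card_finMulAntidiag_le {k y T : ℕ} (hk : 0 < k) (hy : y ≠ 0) (hT : 1 < T) :
    #(Nat.finMulAntidiag k y) ≤ (Nat.log 2 y + 1) ^ ((k - 1) * T) * k ^ Nat.log T y := by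
  refine (Nat.card_finMulAntidiag_le_prod_multichoose k y).trans ?_
  rw [← prod_filter_mul_prod_filter_not y.primeFactors (· < T)]
  refine Nat.mul_le_mul ?_ ?_
  · calc ∏ p ∈ y.primeFactors with p < T, k.multichoose (y.factorization p)
        ≤ ((Nat.log 2 y + 1) ^ (k - 1)) ^ #{p ∈ y.primeFactors | p < T} :=
          prod_le_pow_card _ _ _ fun p _ => (Nat.multichoose_le_succ_pow _ _).trans
            (Nat.pow_le_pow_left (by have := Nat.factorization_le_log_two y p; omega) _)
      _ ≤ ((Nat.log 2 y + 1) ^ (k - 1)) ^ T := by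
          refine Nat.pow_le_pow_right (by positivity) ?_
          simpa using card_le_card (fun p hp => mem_range.mpr (mem_filter.mp hp).2 :
            {p ∈ y.primeFactors | p < T} ⊆ range T)
      _ = (Nat.log 2 y + 1) ^ ((k - 1) * T) := (pow_mul _ _ _).symm
  · calc ∏ p ∈ y.primeFactors with ¬p < T, k.multichoose (y.factorization p)
        ≤ ∏ p ∈ y.primeFactors with ¬p < T, k ^ y.factorization p :=
          prod_le_prod' fun p _ => Nat.multichoose_le_pow _ _
      _ = k ^ ∑ p ∈ y.primeFactors with T ≤ p, y.factorization p := by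
          simp only [not_lt]; exact prod_pow_eq_pow_sum _ _ _
      _ ≤ k ^ Nat.log T y :=
          Nat.pow_le_pow_right hk (Nat.sum_factorization_filter_le_le_log hy hT)

theorem Real.natLog_mul_log_le {b y : ℕ} (hb : 1 < b) (hy : y ≠ 0) :
    (Nat.log b y : ℝ) * log b ≤ log y := by
  rw [← log_pow]
  exact log_le_log (by positivity) (by exact_mod_cast Nat.pow_log_le_self b hy)

theorem Real.log_natLog_two_add_one_le {y : ℕ} (hL : 3 ≤ log y) :
    log (Nat.log 2 y + 1) ≤ 2 * log (log y) := by
  have hy : y ≠ 0 := by rintro rfl; simp at hL; linarith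
  have h2 : (Nat.log 2 y : ℝ) * log 2 ≤ log y := natLog_mul_log_le one_lt_two hy
  have hML : (Nat.log 2 y : ℝ) + 1 ≤ log y ^ 2 := by nlinarith [log_two_gt_d9]
  calc log (Nat.log 2 y + 1) ≤ log (log y ^ 2) := log_le_log (by positivity) hML
    _ = 2 * log (log y) := by rw [log_pow, Nat.cast_ofNat]

theorem Real.natCast_sub_one_le_mul_log (k : ℕ) : ((k - 1 : ℕ) : ℝ) ≤ k * log k := by
  rcases k.eq_zero_or_pos with rfl | hk
  · simp
  have hk0 : (0 : ℝ) < k := Nat.cast_pos.mpr hk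
  calc ((k - 1 : ℕ) : ℝ) = k * (1 - (k : ℝ)⁻¹) := by
        rw [Nat.cast_sub hk, mul_sub, mul_inv_cancel₀ hk0.ne']; simp
    _ ≤ k * log k := mul_le_mul_of_nonneg_left (one_sub_inv_le_log_of_pos hk0) hk0.le

theorem card_finMulAntidiag_le_rpow {k y : ℕ} (hk : 1 ≤ k) (hL : 3 ≤ log y)
    (hLL : 4 * log (log y) ^ 3 ≤ √(log y)) (hkLL : (k : ℝ) ≤ log (log y)) :
    (#(Nat.finMulAntidiag k y) : ℝ) ≤ (y : ℝ) ^ (3 * log k / log (log y)) := by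
  set L := log y
  set LL := log L
  set M := Nat.log 2 y
  set T := ⌈√L⌉₊
  set N := Nat.log T y
  have hy : y ≠ 0 := by rintro rfl; simp [L] at hL; linarith
  have hLL0 : 0 < LL := log_pos (by linarith)
  have hsqrtL : 1 < √L := (lt_sqrt zero_le_one).mpr (by linarith)
  have hT : 1 < T := Nat.lt_ceil.mpr (by exact_mod_cast hsqrtL)
  have hlogk : 0 ≤ log k := log_natCast_nonneg k
  have hTle : (T : ℝ) ≤ 2 * √L := by linarith [Nat.ceil_lt_add_one (sqrt_nonneg L)]
  have hN : (N : ℝ) * LL ≤ 2 * L := by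
    have hlogT : LL / 2 ≤ log T := by
      rw [← log_sqrt (by linarith)]
      exact log_le_log (by linarith) (Nat.le_ceil _)
    nlinarith [natLog_mul_log_le hT hy, (Nat.cast_nonneg N : (0 : ℝ) ≤ N)]
  have hsmall : ((k - 1 : ℕ) : ℝ) * T * log (M + 1) ≤ LL * log k * (2 * √L) * (2 * LL) := by
    gcongr
    · exact log_nonneg (by simp)
    · exact (natCast_sub_one_le_mul_log k).trans (mul_le_mul_of_nonneg_right hkLL hlogk)
    · exact log_natLog_two_add_one_le hL
  have hLL4 : 4 * LL ^ 3 * √L ≤ L := by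
    nlinarith [mul_self_sqrt (show 0 ≤ L by linarith)]
  -- Small primes cost at most `log k · L / LL` since `4 LL³ ≤ √L`, large ones `2 log k · L / LL`.
  have hexponent : ((k - 1 : ℕ) : ℝ) * T * log (M + 1) + N * log k ≤ 3 * log k / LL * L := by
    rw [div_mul_eq_mul_div, le_div_iff₀ hLL0]
    nlinarith [mul_le_mul_of_nonneg_right hsmall hLL0.le, mul_le_mul_of_nonneg_right hLL4 hlogk,
      mul_le_mul_of_nonneg_right hN hlogk]
  calc (#(Nat.finMulAntidiag k y) : ℝ) ≤ (((M + 1) ^ ((k - 1) * T) * k ^ N : ℕ) : ℝ) := by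
        exact_mod_cast Nat.card_finMulAntidiag_le hk hy hT
    _ = exp (((k - 1 : ℕ) : ℝ) * T * log (M + 1) + N * log k) := by
        rw [exp_add, show ((k - 1 : ℕ) : ℝ) * T * log (M + 1) =
          (((k - 1) * T : ℕ) : ℝ) * log (M + 1) by push_cast; ring, exp_nat_mul, exp_nat_mul,
          exp_log (by positivity), exp_log (Nat.cast_pos.mpr hk)]
        push_cast; rfl
    _ ≤ exp (3 * log k / LL * L) := exp_le_exp.mpr hexponent
    _ = (y : ℝ) ^ (3 * log k / LL) := by
        rw [rpow_def_of_pos (by positivity), mul_comm]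

theorem eventually_three_le_log_and_log_log_cube_le : ∀ᶠ y : ℕ in atTop,
    3 ≤ log y ∧ 4 * log (log y) ^ 3 ≤ √(log y) := by
  refine (tendsto_log_atTop.comp tendsto_natCast_atTop_atTop).eventually (p := fun L =>
    3 ≤ L ∧ 4 * log L ^ 3 ≤ √L) ?_
  filter_upwards [(isLittleO_log_rpow_rpow_atTop 3 one_half_pos).bound
    (by norm_num : (0 : ℝ) < 1 / 4), eventually_ge_atTop 3] with L hL h3
  refine ⟨h3, ?_⟩
  rw [norm_of_nonneg (rpow_nonneg (log_nonneg (by linarith)) _),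
    norm_of_nonneg (rpow_nonneg (by linarith) _), rpow_ofNat, ← sqrt_eq_rpow] at hL
  linarith

/-- there are absolute constants `C > 0` and `y₀` such that for all
integers `y ≥ y₀`, `H ≥ 1` and `1 ≤ k ≤ log log y`, one has
`N_k(H; y) ≤ C · (2H)^k · H^{C·k·log k / log log y} / y`. -/
theorem stmt4 :
    ∃ C : ℝ, 0 < C ∧ ∃ y₀ : ℕ, ∀ y H k : ℕ, y₀ ≤ y → 1 ≤ H → 1 ≤ k →
      (k : ℝ) ≤ Real.log (Real.log y) →
      (NkHy k H y : ℝ) ≤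
        C * (2 * (H : ℝ)) ^ k *
          (H : ℝ) ^ (C * (k : ℝ) * Real.log k / Real.log (Real.log y)) / (y : ℝ) := by
  obtain ⟨y₀, hy₀⟩ := eventually_three_le_log_and_log_log_cube_le.exists_forall_of_atTop
  refine ⟨3, by norm_num, y₀, fun y H k hy _ hk hkLL => ?_⟩
  obtain ⟨hL, hLL⟩ := hy₀ y hy
  rcases lt_or_ge (H ^ k) y with hHy | hyH
  · rw [NkHy_eq_zero_of_pow_lt hHy, Nat.cast_zero]
    positivity
  have hy0 : y ≠ 0 := by rintro rfl; simp at hL; linarith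
  have he : 0 ≤ 3 * log k / log (log y) := by
    have := log_natCast_nonneg k
    have : 0 < log (log y) := log_pos (by linarith)
    positivity
  calc (NkHy k H y : ℝ) ≤ #(Nat.finMulAntidiag k y) * (2 * H) ^ k / y :=
        NkHy_le_card_finMulAntidiag hy0
    _ ≤ (y : ℝ) ^ (3 * log k / log (log y)) * (2 * H) ^ k / y := by
        gcongr; exact card_finMulAntidiag_le_rpow hk hL hLL hkLL
    _ ≤ ((H : ℝ) ^ k) ^ (3 * log k / log (log y)) * (2 * H) ^ k / y := by
        gcongr; exact_mod_cast hyH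
    _ = (2 * (H : ℝ)) ^ k * (H : ℝ) ^ (3 * (k : ℝ) * log k / log (log y)) / y := by
        rw [← rpow_natCast, ← rpow_mul (Nat.cast_nonneg H),
          show (k : ℝ) * (3 * log k / log (log y)) = 3 * k * log k / log (log y) by ring]
        ring
    _ ≤ 3 * (2 * (H : ℝ)) ^ k * (H : ℝ) ^ (3 * (k : ℝ) * log k / log (log y)) / y := by
        gcongr ?_ * _ / _
        exact le_mul_of_one_le_left (by positivity) (by norm_num)
end

section
/- For every integer k ≥ 1 there exist a constant C_k > 0 and a threshold x₀(k) such that for all integers x ≥ x₀(k) and H ≥ 1 with H ≤ x^{1 − 1/(100k)}, the number N_k(x, H) of nontrivial solutions satisfies N_k(x, H) ≤ C_k · H^k · (H/x)^{1/2}. -/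
/-!
Induction on `k`. A nontrivial solution either has a coincidence `n_i = n_{k+i'}`, and
deleting that pair leaves a nontrivial solution with `k - 1` factors on each side (at most
`k² H N_{k-1}` such solutions), or its two sides are disjoint. In the disjoint case
`m = n_{k+1}` divides `n₁⋯n_k`, so `m = c₁⋯c_k` with `c_i ∣ n_i`; as `c_i` also divides
`m ≠ n_i`, it divides a nonzero difference of two points of `(x, x + H]`, whence `c_i ≤ H`.
Given `m` and the `c_i` there are at most `∏ 2H / c_i = (2H)^k / m ≤ (2H)^k / x` choices of
the `n_i`, and then `n_{k+2}, …, n_{2k}` are divisors of `n₁⋯n_k`. The divisor bound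
`d(n)^J ≪_J n` with `J = 400 k³` bounds every divisor count occurring here by `T` with
`T^{2k} ≪ x^{1/(200k)}`, so there are `≪ H^k (H/x) x^{1/(200k)} ≤ H^k (H/x)^{1/2}` disjoint
solutions, the last step being exactly `H ≤ x^{1 - 1/(100k)}`.
-/

/-- `N_k(x, H)`: the number of nontrivial solutions
`(n₁,…,n_{2k}) ∈ ((x, x+H] ∩ ℤ)^{2k}` of `n₁⋯n_k = n_{k+1}⋯n_{2k}`, where a solution
is trivial iff the multiset `{n₁,…,n_k}` equals the multiset `{n_{k+1},…,n_{2k}}`.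
Here `p.1 i = n_i` and `p.2 i = n_{k+i}`. -/
noncomputable def NkCount (k x H : ℕ) : ℕ :=
  Nat.card {p : (Fin k → ℕ) × (Fin k → ℕ) //
    (∀ i, p.1 i ∈ Finset.Ioc x (x + H)) ∧ (∀ i, p.2 i ∈ Finset.Ioc x (x + H)) ∧
    (∏ i, p.1 i) = (∏ i, p.2 i) ∧
    Multiset.map p.1 Finset.univ.val ≠ Multiset.map p.2 Finset.univ.val}

open Finset
open scoped Nat

lemma succ_pow_le_mul_two_pow (a J : ℕ) : (a + 1) ^ J ≤ J ! * 2 ^ J * 2 ^ a :=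
  calc (a + 1) ^ J ≤ (a + 1).ascFactorial J := Nat.pow_succ_le_ascFactorial _ _
    _ = J ! * (a + J).choose J := Nat.ascFactorial_eq_factorial_mul_choose a J
    _ ≤ J ! * 2 ^ (a + J) := Nat.mul_le_mul_left _ (Nat.choose_le_two_pow _ _)
    _ = J ! * 2 ^ J * 2 ^ a := by ring

lemma succ_pow_le_pow_of_two_pow_le {p : ℕ} (a J : ℕ) (hp : 2 ^ J ≤ p) :
    (a + 1) ^ J ≤ p ^ a :=
  calc (a + 1) ^ J ≤ (2 ^ a) ^ J := Nat.pow_le_pow_left Nat.lt_two_pow_self J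
    _ = (2 ^ J) ^ a := by rw [← pow_mul, ← pow_mul, mul_comm]
    _ ≤ p ^ a := Nat.pow_le_pow_left hp a

theorem exists_card_divisors_pow_le (J : ℕ) :
    ∃ κ, 1 ≤ κ ∧ ∀ n ≠ 0, #n.divisors ^ J ≤ κ * n := by
  set B := J ! * 2 ^ J
  have hB : 1 ≤ B := Nat.one_le_iff_ne_zero.mpr (by positivity)
  refine ⟨B ^ 2 ^ J, Nat.one_le_pow _ _ hB, fun n hn => ?_⟩
  set a := n.factorization
  -- Only primes `p < 2 ^ J` can have `(a p + 1) ^ J > p ^ a p`, and each costs at most `B`.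
  have hsmall : ∏ p ∈ n.primeFactors with p < 2 ^ J, (a p + 1) ^ J ≤
      B ^ 2 ^ J * ∏ p ∈ n.primeFactors with p < 2 ^ J, p ^ a p :=
    calc ∏ p ∈ n.primeFactors with p < 2 ^ J, (a p + 1) ^ J
        ≤ ∏ p ∈ n.primeFactors with p < 2 ^ J, B * p ^ a p := by
          refine prod_le_prod' fun p hp => (succ_pow_le_mul_two_pow _ J).trans ?_
          have hp2 := (Nat.prime_of_mem_primeFactors (mem_filter.mp hp).1).two_le
          exact Nat.mul_le_mul_left _ (Nat.pow_le_pow_left hp2 _)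
      _ = B ^ #{p ∈ n.primeFactors | p < 2 ^ J} *
            ∏ p ∈ n.primeFactors with p < 2 ^ J, p ^ a p := by
          rw [prod_mul_distrib, prod_const]
      _ ≤ B ^ 2 ^ J * ∏ p ∈ n.primeFactors with p < 2 ^ J, p ^ a p := by
          refine Nat.mul_le_mul_right _ (Nat.pow_le_pow_right hB ?_)
          calc #{p ∈ n.primeFactors | p < 2 ^ J} ≤ #(range (2 ^ J)) :=
                card_le_card fun p hp => mem_range.mpr (mem_filter.mp hp).2
            _ = 2 ^ J := card_range _
  have hlarge : ∏ p ∈ n.primeFactors with ¬p < 2 ^ J, (a p + 1) ^ J ≤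
      ∏ p ∈ n.primeFactors with ¬p < 2 ^ J, p ^ a p :=
    prod_le_prod' fun p hp => succ_pow_le_pow_of_two_pow_le _ _ (not_lt.mp (mem_filter.mp hp).2)
  calc #n.divisors ^ J = ∏ p ∈ n.primeFactors, (a p + 1) ^ J := by
        rw [Nat.card_divisors hn, prod_pow]
    _ = (∏ p ∈ n.primeFactors with p < 2 ^ J, (a p + 1) ^ J) *
          ∏ p ∈ n.primeFactors with ¬p < 2 ^ J, (a p + 1) ^ J :=
        (prod_filter_mul_prod_filter_not _ _ _).symm
    _ ≤ (B ^ 2 ^ J * ∏ p ∈ n.primeFactors with p < 2 ^ J, p ^ a p) *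
          ∏ p ∈ n.primeFactors with ¬p < 2 ^ J, p ^ a p := Nat.mul_le_mul hsmall hlarge
    _ = B ^ 2 ^ J * n := by
        rw [mul_assoc, prod_filter_mul_prod_filter_not,
          ← Nat.prod_primeFactors_pow_factorization hn]

lemma exists_card_divisors_le {J k κ : ℕ} (hk : k ≠ 0)
    (hdiv : ∀ n ≠ 0, #n.divisors ^ (J * k) ≤ κ * n) {N : ℕ} (hN : N ≠ 0) :
    ∃ T, 1 ≤ T ∧ T ^ J ≤ κ * N ∧ ∀ m ≠ 0, m ≤ N ^ k → #m.divisors ≤ T := by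
  set T := (Icc 1 (N ^ k)).sup fun m => #m.divisors
  have h1 : 1 ∈ Icc 1 (N ^ k) :=
    mem_Icc.mpr ⟨le_rfl, Nat.one_le_pow _ _ (Nat.pos_of_ne_zero hN)⟩
  have hle : ∀ m ≠ 0, m ≤ N ^ k → #m.divisors ≤ T := fun m hm hmN =>
    le_sup (f := fun m => #m.divisors) (mem_Icc.mpr ⟨Nat.one_le_iff_ne_zero.mpr hm, hmN⟩)
  refine ⟨T, by simpa using hle 1 one_ne_zero (mem_Icc.mp h1).2, ?_, hle⟩
  obtain ⟨m, hm, hTm⟩ := exists_mem_eq_sup _ ⟨1, h1⟩ fun m => #m.divisors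
  obtain ⟨hm1, hmN⟩ := mem_Icc.mp hm
  refine (Nat.pow_le_pow_iff_left hk).mp ?_
  calc (T ^ J) ^ k = #m.divisors ^ (J * k) := by rw [show T = #m.divisors from hTm, pow_mul]
    _ ≤ κ * m := hdiv m (by omega)
    _ ≤ κ ^ k * N ^ k := Nat.mul_le_mul (Nat.le_self_pow hk κ) hmN
    _ = (κ * N) ^ k := (mul_pow _ _ _).symm

def nontrivialSolutions (k x H : ℕ) : Finset ((Fin k → ℕ) × (Fin k → ℕ)) :=
  {p ∈ Fintype.piFinset (fun _ => Ioc x (x + H)) ×ˢ Fintype.piFinset (fun _ => Ioc x (x + H)) |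
    ∏ i, p.1 i = ∏ i, p.2 i ∧ Multiset.map p.1 univ.val ≠ Multiset.map p.2 univ.val}

lemma mem_nontrivialSolutions {k x H : ℕ} {p : (Fin k → ℕ) × (Fin k → ℕ)} :
    p ∈ nontrivialSolutions k x H ↔ (∀ i, p.1 i ∈ Ioc x (x + H)) ∧
      (∀ i, p.2 i ∈ Ioc x (x + H)) ∧ ∏ i, p.1 i = ∏ i, p.2 i ∧
      Multiset.map p.1 univ.val ≠ Multiset.map p.2 univ.val := by
  simp [nontrivialSolutions, Fintype.mem_piFinset, and_assoc]

lemma NkCount_eq_card (k x H : ℕ) : NkCount k x H = #(nontrivialSolutions k x H) := by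
  rw [NkCount, ← Nat.card_eq_finsetCard]
  exact Nat.card_congr (Equiv.subtypeEquivRight fun _ => mem_nontrivialSolutions.symm)

lemma nontrivialSolutions_zero (x H : ℕ) : nontrivialSolutions 0 x H = ∅ := by
  ext p
  simp [mem_nontrivialSolutions]

lemma map_univ_val_eq_cons_removeNth {α : Type*} {j : ℕ} (f : Fin (j + 1) → α)
    (i : Fin (j + 1)) :
    Multiset.map f univ.val = f i ::ₘ Multiset.map (i.removeNth f) univ.val := by
  rw [Fin.univ_succAbove _ i, cons_val, Multiset.map_cons, map_val, Multiset.map_map]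
  rfl

lemma removeNth_mem_nontrivialSolutions {j x H : ℕ} {p : (Fin (j + 1) → ℕ) × (Fin (j + 1) → ℕ)}
    (hp : p ∈ nontrivialSolutions (j + 1) x H) {i i' : Fin (j + 1)} (hii' : p.1 i = p.2 i') :
    (i.removeNth p.1, i'.removeNth p.2) ∈ nontrivialSolutions j x H := by
  obtain ⟨h1, h2, hprod, hne⟩ := mem_nontrivialSolutions.mp hp
  refine mem_nontrivialSolutions.mpr ⟨fun _ => h1 _, fun _ => h2 _, ?_, fun h => hne ?_⟩
  · refine Nat.eq_of_mul_eq_mul_left (lt_of_le_of_lt (Nat.zero_le x) (mem_Ioc.mp (h1 i)).1) ?_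
    rw [Fin.prod_univ_succAbove _ i, Fin.prod_univ_succAbove _ i', ← hii'] at hprod
    exact hprod
  · rw [map_univ_val_eq_cons_removeNth p.1 i, map_univ_val_eq_cons_removeNth p.2 i', hii', h]

lemma card_filter_exists_eq_le (j x H : ℕ) :
    #{p ∈ nontrivialSolutions (j + 1) x H | ∃ i i', p.1 i = p.2 i'} ≤
      (j + 1) ^ 2 * H * #(nontrivialSolutions j x H) := by
  classical
  let reinsert (ii : Fin (j + 1) × Fin (j + 1)) (vq : ℕ × (Fin j → ℕ) × (Fin j → ℕ)) :
      (Fin (j + 1) → ℕ) × (Fin (j + 1) → ℕ) :=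
    (Fin.insertNth ii.1 vq.1 vq.2.1, Fin.insertNth ii.2 vq.1 vq.2.2)
  calc #{p ∈ nontrivialSolutions (j + 1) x H | ∃ i i', p.1 i = p.2 i'}
      ≤ #(univ.biUnion fun ii =>
          (Ioc x (x + H) ×ˢ nontrivialSolutions j x H).image (reinsert ii)) := by
        refine card_le_card fun p hp => ?_
        obtain ⟨hp, i, i', hii'⟩ := mem_filter.mp hp
        refine mem_biUnion.mpr ⟨(i, i'), mem_univ _, mem_image.mpr
          ⟨(p.1 i, i.removeNth p.1, i'.removeNth p.2), mem_product.mpr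
            ⟨(mem_nontrivialSolutions.mp hp).1 i, removeNth_mem_nontrivialSolutions hp hii'⟩, ?_⟩⟩
        ext1
        · exact Fin.insertNth_self_removeNth i p.1
        · simpa only [hii'] using Fin.insertNth_self_removeNth i' p.2
    _ ≤ ∑ _ii : Fin (j + 1) × Fin (j + 1), #(Ioc x (x + H) ×ˢ nontrivialSolutions j x H) :=
        card_biUnion_le.trans (sum_le_sum fun _ _ => card_image_le)
    _ = (j + 1) ^ 2 * H * #(nontrivialSolutions j x H) := by
        simp only [sum_const, card_product, card_univ, Fintype.card_prod, Fintype.card_fin,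
          Nat.card_Ioc, add_tsub_cancel_left, smul_eq_mul]
        ring

lemma card_filter_dvd_Ioc_mul_le (x H c : ℕ) : #{n ∈ Ioc x (x + H) | c ∣ n} * c ≤ H + c := by
  have hsplit : {n ∈ Ioc x (x + H) | c ∣ n} =
      {n ∈ Ioc 0 (x + H) | c ∣ n} \ {n ∈ Ioc 0 x | c ∣ n} := by
    ext n; simp only [mem_filter, mem_Ioc, mem_sdiff]; omega
  have hsub : {n ∈ Ioc 0 x | c ∣ n} ⊆ {n ∈ Ioc 0 (x + H) | c ∣ n} :=
    filter_subset_filter _ (Ioc_subset_Ioc_right (Nat.le_add_right x H))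
  rw [hsplit, card_sdiff_of_subset hsub, Nat.Ioc_filter_dvd_card_eq_div,
    Nat.Ioc_filter_dvd_card_eq_div, Nat.sub_mul]
  have h1 := Nat.div_mul_le_self (x + H) c
  have h2 := Nat.div_add_mod' x c
  rcases Nat.eq_zero_or_pos c with rfl | hc
  · simp
  have h3 := Nat.mod_lt x hc
  omega

lemma le_of_dvd_of_dvd_of_mem_Ioc {x H a b c : ℕ} (ha : a ∈ Ioc x (x + H))
    (hb : b ∈ Ioc x (x + H)) (hab : a ≠ b) (hca : c ∣ a) (hcb : c ∣ b) : c ≤ H := by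
  rw [mem_Ioc] at ha hb
  rcases Nat.lt_or_gt_of_ne hab with h | h
  · exact (Nat.le_of_dvd (by omega) (Nat.dvd_sub hcb hca)).trans (by omega)
  · exact (Nat.le_of_dvd (by omega) (Nat.dvd_sub hca hcb)).trans (by omega)

theorem exists_prod_eq_of_dvd_prod {α : Type*} [CommMonoid α] [DecompositionMonoid α] :
    ∀ {j : ℕ} (n : Fin (j + 1) → α) {m : α}, m ∣ ∏ i, n i →
      ∃ c : Fin (j + 1) → α, (∀ i, c i ∣ n i) ∧ ∏ i, c i = m
  | 0, n, m, h => ⟨fun _ => m, fun i => by simpa [Fin.fin_one_eq_zero i] using h, by simp⟩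
  | j + 1, n, m, h => by
    rw [Fin.prod_univ_succ] at h
    obtain ⟨d, e, hd, he, rfl⟩ := exists_dvd_and_dvd_of_dvd_mul h
    obtain ⟨c, hc, rfl⟩ := exists_prod_eq_of_dvd_prod (fun i => n i.succ) he
    exact ⟨Fin.cons d c, Fin.cases hd hc, by rw [Fin.prod_univ_succ]; rfl⟩

lemma prod_card_filter_dvd_Ioc_mul_le {j x H : ℕ} {c : Fin j → ℕ} (hcH : ∀ i, c i ≤ H)
    (hx : x ≤ ∏ i, c i) : (∏ i, #{n ∈ Ioc x (x + H) | c i ∣ n}) * x ≤ (2 * H) ^ j :=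
  calc (∏ i, #{n ∈ Ioc x (x + H) | c i ∣ n}) * x
      ≤ (∏ i, #{n ∈ Ioc x (x + H) | c i ∣ n}) * ∏ i, c i := Nat.mul_le_mul_left _ hx
    _ = ∏ i, #{n ∈ Ioc x (x + H) | c i ∣ n} * c i := prod_mul_distrib.symm
    _ ≤ ∏ _i : Fin j, 2 * H :=
        prod_le_prod' fun i _ =>
          (card_filter_dvd_Ioc_mul_le x H (c i)).trans (by linarith [hcH i])
    _ = (2 * H) ^ j := by rw [prod_const, card_univ, Fintype.card_fin]

def boundedFactorizations (j H m : ℕ) : Finset (Fin (j + 1) → ℕ) :=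
  {c ∈ Fintype.piFinset fun _ => m.divisors | (∀ i, c i ≤ H) ∧ ∏ i, c i = m}

lemma card_boundedFactorizations_le (j H m : ℕ) :
    #(boundedFactorizations j H m) ≤ #m.divisors ^ (j + 1) := by
  simpa [boundedFactorizations] using
    card_filter_le (Fintype.piFinset fun _ : Fin (j + 1) => m.divisors) _

lemma filter_not_exists_eq_subset_biUnion (j x H : ℕ) :
    {p ∈ nontrivialSolutions (j + 1) x H | ¬∃ i i', p.1 i = p.2 i'} ⊆
      (Ioc x (x + H)).biUnion fun m => (boundedFactorizations j H m).biUnion fun c =>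
        {p ∈ nontrivialSolutions (j + 1) x H | p.2 0 = m ∧ ∀ i, c i ∣ p.1 i} := by
  intro p hp
  obtain ⟨hp, hdisj⟩ := mem_filter.mp hp
  obtain ⟨h1, h2, hprod, -⟩ := mem_nontrivialSolutions.mp hp
  obtain ⟨c, hc, hcm⟩ :=
    exists_prod_eq_of_dvd_prod p.1 (m := p.2 0) (hprod ▸ dvd_prod_of_mem _ (mem_univ 0))
  have hm0 : p.2 0 ≠ 0 := (lt_of_le_of_lt (Nat.zero_le x) (mem_Ioc.mp (h2 0)).1).ne'
  have hcm' : ∀ i, c i ∣ p.2 0 := fun i => hcm ▸ dvd_prod_of_mem _ (mem_univ i)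
  have hcH : ∀ i, c i ≤ H := fun i =>
    le_of_dvd_of_dvd_of_mem_Ioc (h1 i) (h2 0) (fun h => hdisj ⟨i, 0, h⟩) (hc i) (hcm' i)
  exact mem_biUnion.mpr ⟨p.2 0, h2 0, mem_biUnion.mpr ⟨c, mem_filter.mpr
    ⟨Fintype.mem_piFinset.mpr fun i => Nat.mem_divisors.mpr ⟨hcm' i, hm0⟩, hcH, hcm⟩,
    mem_filter.mpr ⟨hp, rfl, hc⟩⟩⟩

section

variable {j x H T : ℕ} (hT : ∀ m ≠ 0, m ≤ (x + H) ^ (j + 1) → #m.divisors ≤ T)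
include hT

lemma card_filter_dvd_le (c : Fin (j + 1) → ℕ) (m : ℕ) :
    #{p ∈ nontrivialSolutions (j + 1) x H | p.2 0 = m ∧ ∀ i, c i ∣ p.1 i} ≤
      T ^ j * ∏ i, #{n ∈ Ioc x (x + H) | c i ∣ n} := by
  classical
  rw [← Fintype.card_piFinset]
  refine card_le_mul_card_image_of_maps_to (f := Prod.fst) (fun p hp => ?_) _ fun n hn => ?_
  · obtain ⟨hp, -, hc⟩ := mem_filter.mp hp
    exact Fintype.mem_piFinset.mpr fun i =>
      mem_filter.mpr ⟨(mem_nontrivialSolutions.mp hp).1 i, hc i⟩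
  have hn : ∀ i, n i ∈ Ioc x (x + H) := fun i =>
    (mem_filter.mp (Fintype.mem_piFinset.mp hn i)).1
  have hprod0 : ∏ i, n i ≠ 0 :=
    prod_ne_zero_iff.mpr fun i _ => (lt_of_le_of_lt (Nat.zero_le x) (mem_Ioc.mp (hn i)).1).ne'
  have hprodle : ∏ i, n i ≤ (x + H) ^ (j + 1) := by
    simpa using prod_le_pow_card univ n (x + H) fun i _ => (mem_Ioc.mp (hn i)).2
  calc #{p ∈ {p ∈ nontrivialSolutions (j + 1) x H | p.2 0 = m ∧ ∀ i, c i ∣ p.1 i} | p.1 = n}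
      ≤ #(Fintype.piFinset fun _ : Fin j => (∏ i, n i).divisors) := by
        refine card_le_card_of_injOn (fun p => Fin.tail p.2) (fun p hp => ?_)
          fun p hp q hq hpq => ?_
        · simp only [coe_filter, mem_filter, Set.mem_ofPred_eq] at hp
          obtain ⟨⟨hp, -⟩, rfl⟩ := hp
          refine Fintype.mem_piFinset.mpr fun t => Nat.mem_divisors.mpr ⟨?_, hprod0⟩
          rw [(mem_nontrivialSolutions.mp hp).2.2.1]
          exact dvd_prod_of_mem _ (mem_univ _)
        · simp only [coe_filter, mem_filter, Set.mem_ofPred_eq] at hp hq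
          obtain ⟨⟨-, hp0, -⟩, hp1⟩ := hp
          obtain ⟨⟨-, hq0, -⟩, hq1⟩ := hq
          refine Prod.ext (hp1.trans hq1.symm) ?_
          rw [← Fin.cons_self_tail p.2, ← Fin.cons_self_tail q.2, hp0, hq0]
          exact congrArg _ hpq
    _ = #(∏ i, n i).divisors ^ j := by simp
    _ ≤ T ^ j := Nat.pow_le_pow_left (hT _ hprod0 hprodle) j

lemma card_filter_not_exists_eq_mul_le :
    #{p ∈ nontrivialSolutions (j + 1) x H | ¬∃ i i', p.1 i = p.2 i'} * x ≤
      H * T ^ (2 * j + 1) * (2 * H) ^ (j + 1) := by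
  classical
  let fiber (m : ℕ) (c : Fin (j + 1) → ℕ) :=
    {p ∈ nontrivialSolutions (j + 1) x H | p.2 0 = m ∧ ∀ i, c i ∣ p.1 i}
  have hfactorizations :
      ∀ m ∈ Ioc x (x + H), #(boundedFactorizations j H m) ≤ T ^ (j + 1) := by
    intro m hm
    obtain ⟨hxm, hmH⟩ := mem_Ioc.mp hm
    exact (card_boundedFactorizations_le j H m).trans (Nat.pow_le_pow_left (hT m (by omega)
      (hmH.trans (Nat.le_self_pow (Nat.succ_ne_zero j) _))) _)
  have hfiber : ∀ m ∈ Ioc x (x + H), ∀ c ∈ boundedFactorizations j H m,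
      #(fiber m c) * x ≤ T ^ j * (2 * H) ^ (j + 1) := by
    intro m hm c hc
    obtain ⟨-, hcH, rfl⟩ := mem_filter.mp hc
    calc #(fiber _ c) * x ≤ T ^ j * (∏ i, #{n ∈ Ioc x (x + H) | c i ∣ n}) * x :=
          Nat.mul_le_mul_right _ (card_filter_dvd_le hT c _)
      _ ≤ T ^ j * (2 * H) ^ (j + 1) := by
          rw [mul_assoc]
          exact Nat.mul_le_mul_left _
            (prod_card_filter_dvd_Ioc_mul_le hcH (mem_Ioc.mp hm).1.le)
  calc #{p ∈ nontrivialSolutions (j + 1) x H | ¬∃ i i', p.1 i = p.2 i'} * x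
      ≤ (∑ m ∈ Ioc x (x + H), ∑ c ∈ boundedFactorizations j H m, #(fiber m c)) * x :=
        Nat.mul_le_mul_right _
          ((card_le_card (filter_not_exists_eq_subset_biUnion j x H)).trans
            (card_biUnion_le.trans (sum_le_sum fun _ _ => card_biUnion_le)))
    _ = ∑ m ∈ Ioc x (x + H), ∑ c ∈ boundedFactorizations j H m, #(fiber m c) * x := by
        simp only [sum_mul]
    _ ≤ ∑ m ∈ Ioc x (x + H), ∑ _c ∈ boundedFactorizations j H m, T ^ j * (2 * H) ^ (j + 1) :=
        sum_le_sum fun m hm => sum_le_sum fun c hc => hfiber m hm c hc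
    _ ≤ ∑ _m ∈ Ioc x (x + H), T ^ (j + 1) * (T ^ j * (2 * H) ^ (j + 1)) :=
        sum_le_sum fun m hm => by
          rw [sum_const, smul_eq_mul]
          exact Nat.mul_le_mul_right _ (hfactorizations m hm)
    _ = H * T ^ (2 * j + 1) * (2 * H) ^ (j + 1) := by
        rw [sum_const, Nat.card_Ioc, add_tsub_cancel_left, smul_eq_mul]
        ring

lemma card_nontrivialSolutions_succ_le (hx : 0 < x) :
    (#(nontrivialSolutions (j + 1) x H) : ℝ) ≤
      (j + 1) ^ 2 * H * #(nontrivialSolutions j x H) +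
        2 ^ (j + 1) * H ^ (j + 1) * ((T : ℝ) ^ (2 * j + 1) * (H / x)) := by
  have hsplit : #(nontrivialSolutions (j + 1) x H) * x ≤
      (j + 1) ^ 2 * H * #(nontrivialSolutions j x H) * x +
        H * T ^ (2 * j + 1) * (2 * H) ^ (j + 1) := by
    rw [← card_filter_add_card_filter_not fun p => ∃ i i', p.1 i = p.2 i', add_mul]
    exact add_le_add (Nat.mul_le_mul_right _ (card_filter_exists_eq_le j x H))
      (card_filter_not_exists_eq_mul_le hT)
  have hx0 : (0 : ℝ) < x := by exact_mod_cast hx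
  calc (#(nontrivialSolutions (j + 1) x H) : ℝ)
      = #(nontrivialSolutions (j + 1) x H) * x / x := (mul_div_cancel_right₀ _ hx0.ne').symm
    _ ≤ ((j + 1) ^ 2 * H * #(nontrivialSolutions j x H) * x +
          H * T ^ (2 * j + 1) * (2 * H) ^ (j + 1)) / x := by
        gcongr
        exact_mod_cast hsplit
    _ = _ := by field_simp; ring

end

lemma pow_mul_le_pow_of_le_rpow {x H : ℝ} {n : ℕ} (hn : n ≠ 0) (hx : 0 ≤ x) (hH : 0 ≤ H)
    (h : H ≤ x ^ (1 - 1 / (n : ℝ))) : H ^ n * x ≤ x ^ n := by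
  rcases hx.eq_or_lt with rfl | hx
  · simp [hn]
  calc H ^ n * x ≤ (x ^ (1 - 1 / (n : ℝ))) ^ n * x := by gcongr
    _ = x ^ n := by
        rw [← Real.rpow_natCast, ← Real.rpow_mul hx.le, ← Real.rpow_add_one hx.ne',
          ← Real.rpow_natCast]
        congr 1
        field_simp
        ring

lemma mul_le_mul_sqrt_of_pow_le {A c s x : ℝ} {n : ℕ} (hn : n ≠ 0) (hc : 1 ≤ c)
    (hs : 0 ≤ s) (hAc : (A ^ 2) ^ n ≤ c * x) (hsx : s ^ n * x ≤ 1) : A * s ≤ c * √s := by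
  have hAs : A ^ 2 * s ≤ c := by
    refine le_of_pow_le_pow_left₀ hn (by linarith) ?_
    calc (A ^ 2 * s) ^ n = (A ^ 2) ^ n * s ^ n := mul_pow _ _ _
      _ ≤ c * x * s ^ n := by gcongr
      _ = c * (s ^ n * x) := by ring
      _ ≤ c := mul_le_of_le_one_right (by linarith) hsx
      _ ≤ c ^ n := le_self_pow₀ hc hn
  refine le_of_pow_le_pow_left₀ two_ne_zero (by positivity) ?_
  calc (A * s) ^ 2 = A ^ 2 * s * s := by ring
    _ ≤ c * s := by gcongr
    _ ≤ c ^ 2 * s := by gcongr; nlinarith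
    _ = (c * √s) ^ 2 := by rw [mul_pow, Real.sq_sqrt hs]

theorem exists_card_nontrivialSolutions_le {k κ : ℕ} (hk : k ≠ 0) (hκ : 1 ≤ κ)
    (hdiv : ∀ n ≠ 0, #n.divisors ^ (400 * k ^ 2 * k) ≤ κ * n) :
    ∀ j ≤ k, ∃ C : ℝ, 0 < C ∧ ∀ x H : ℕ, 1 ≤ x → H ^ (100 * k) * x ≤ x ^ (100 * k) →
      (#(nontrivialSolutions j x H) : ℝ) ≤ C * H ^ j * √(H / x) := by
  intro j hj
  induction j with
  | zero => exact ⟨1, one_pos, fun x H _ _ => by simp [nontrivialSolutions_zero]; positivity⟩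
  | succ j ih =>
    obtain ⟨C, hC, hCbound⟩ := ih (by omega)
    refine ⟨(j + 1) ^ 2 * C + 2 ^ (j + 1) * (2 * κ), by positivity, fun x H hx hHx => ?_⟩
    have hHx' : H ≤ x := (Nat.pow_le_pow_iff_left (by omega : 100 * k ≠ 0)).mp
      ((Nat.le_mul_of_pos_right _ hx).trans hHx)
    obtain ⟨T, hT1, hTκ, hT⟩ := exists_card_divisors_le hk hdiv (N := 2 * x) (by omega)
    have hsize : (x + H) ^ (j + 1) ≤ (2 * x) ^ k :=
      (Nat.pow_le_pow_left (by omega) _).trans (Nat.pow_le_pow_right (by omega) hj)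
    have hsplit := card_nontrivialSolutions_succ_le
      (fun m hm hmle => hT m hm (hmle.trans hsize)) (by omega : 0 < x)
    have hdisj : (T : ℝ) ^ (2 * k) * (H / x) ≤ 2 * κ * √(H / x) := by
      refine mul_le_mul_sqrt_of_pow_le (n := 100 * k) (x := x) (by omega) (by norm_cast; omega)
        (by positivity) ?_ ?_
      · have hT' : ((T ^ (2 * k)) ^ 2) ^ (100 * k) ≤ 2 * κ * x := by
          rw [← pow_mul, ← pow_mul]
          convert hTκ using 1 <;> ring
        exact_mod_cast hT'
      · rw [div_pow, div_mul_eq_mul_div, div_le_one (by positivity)]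
        exact_mod_cast hHx
    have hT2k : (T : ℝ) ^ (2 * j + 1) ≤ T ^ (2 * k) :=
      pow_le_pow_right₀ (by exact_mod_cast hT1) (by omega)
    calc (#(nontrivialSolutions (j + 1) x H) : ℝ)
        ≤ (j + 1) ^ 2 * H * (C * H ^ j * √(H / x)) +
            2 ^ (j + 1) * H ^ (j + 1) * (2 * κ * √(H / x)) := by
          refine hsplit.trans (add_le_add ?_ ?_)
          · gcongr
            exact hCbound x H hx hHx
          · exact mul_le_mul_of_nonneg_left
              ((mul_le_mul_of_nonneg_right hT2k (by positivity)).trans hdisj) (by positivity)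
      _ = ((j + 1) ^ 2 * C + 2 ^ (j + 1) * (2 * κ)) * H ^ (j + 1) * √(H / x) := by ring

/-- for every `k ≥ 1` there are `C_k > 0` and a threshold `x₀(k)` such
that for all integers `x ≥ x₀(k)` and `H ≥ 1` with `H ≤ x^{1 − 1/(100k)}`, one has
`N_k(x, H) ≤ C_k · H^k · (H/x)^{1/2}`. -/
theorem stmt8 (k : ℕ) (hk : 1 ≤ k) :
    ∃ C : ℝ, 0 < C ∧ ∃ x₀ : ℕ, ∀ x H : ℕ, x₀ ≤ x → 1 ≤ H →
      (H : ℝ) ≤ (x : ℝ) ^ ((1 : ℝ) - 1 / (100 * (k : ℝ))) →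
      (NkCount k x H : ℝ) ≤ C * (H : ℝ) ^ k * Real.sqrt ((H : ℝ) / (x : ℝ)) := by
  obtain ⟨κ, hκ, hdiv⟩ := exists_card_divisors_pow_le (400 * k ^ 2 * k)
  obtain ⟨C, hC, hbound⟩ := exists_card_nontrivialSolutions_le (by omega) hκ hdiv k le_rfl
  refine ⟨C, hC, 1, fun x H hx _ hHx => ?_⟩
  rw [NkCount_eq_card]
  refine hbound x H hx ?_
  have hHx' : (H : ℝ) ^ (100 * k) * x ≤ (x : ℝ) ^ (100 * k) :=
    pow_mul_le_pow_of_le_rpow (by omega) (Nat.cast_nonneg x) (Nat.cast_nonneg H)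
      (by push_cast; exact hHx)
  exact_mod_cast hHx'
end

section
/- For every integer k ≥ 1 there exists a constant C_k > 0 such that for all integers y, X, H ≥ 1, the set B_k(X, H; y) of integer tuples (x, t₁, …, t_k, h₁, …, h_k) with 1 ≤ x ≤ X, 1 ≤ t_i ≤ H, h_i ∈ [−H, H] ∩ ℤ, y | (x+t₁)(x+t₂)⋯(x+t_k)·h₁h₂⋯h_k, and h₁h₂⋯h_k ≠ 0, has size at most C_k · H^{2k} · τ₂(y)·τ_k(y)² · (1 + X / rad_k(y)). -/
/-- `τ_k(n)`: the number of `k`-tuples of positive integers with product `n`. -/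
noncomputable def tauNat (k n : ℕ) : ℕ :=
  Nat.card {d : Fin k → ℕ // (∀ i, 0 < d i) ∧ ∏ i, d i = n}

/-- `rad_k(n)`: the minimum of `lcm(n₁,…,n_k)` over factorizations `n = n₁⋯n_k`
into positive integers. -/
noncomputable def radk (k n : ℕ) : ℕ :=
  sInf {m : ℕ | ∃ d : Fin k → ℕ, (∀ i, 0 < d i) ∧ ∏ i, d i = n ∧ Finset.univ.lcm d = m}

/-- `B_k(X, H; y)`: the number of tuples `(x, t₁,…,t_k, h₁,…,h_k)` with `1 ≤ x ≤ X`,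
`1 ≤ t_i ≤ H`, `h_i ∈ [−H, H] ∩ ℤ`, `y ∣ (x+t₁)⋯(x+t_k)·h₁⋯h_k` and `h₁⋯h_k ≠ 0`. -/
noncomputable def BkCount (k X H y : ℕ) : ℕ :=
  Nat.card {t : ℕ × (Fin k → ℕ) × (Fin k → ℤ) //
    t.1 ∈ Finset.Icc 1 X ∧ (∀ i, t.2.1 i ∈ Finset.Icc 1 H) ∧
    (∀ i, t.2.2 i ∈ Finset.Icc (-(H : ℤ)) (H : ℤ)) ∧
    (y : ℤ) ∣ (∏ i, ((t.1 : ℤ) + (t.2.1 i : ℤ))) * ∏ i, t.2.2 i ∧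
    (∏ i, t.2.2 i) ≠ 0}

/-!
If `y ∣ ∏ (x + tᵢ) · ∏ hᵢ`, then `y = ∏ aᵢ · ∏ bᵢ` with `aᵢ ∣ x + tᵢ` and `bᵢ ∣ hᵢ`, and there
are at most `τ₂(y) τ_k(y)²` such pairs of tuples `(a, b)`. For fixed `(a, b)` and `t`, the
admissible `x` form one residue class modulo `L = lcm aᵢ`, so there are at most `X / L + 1` of
them, and each `hᵢ` is a nonzero multiple of `bᵢ` in `[-H, H]`, leaving at most `2H / bᵢ` choices.
As `(aᵢ bᵢ)` is a factorization of `y`, `rad_k(y) ≤ lcm (aᵢ bᵢ) ≤ L · ∏ bᵢ`, so for fixed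
`(a, b, t)` at most `2^k H^k (1 + X / rad_k(y))` pairs `(x, h)` remain; summing over `t` costs
another factor `H^k`.
-/

open Finset

namespace Nat

-- `x ↦ x / L` is injective on a residue class modulo `L`.
theorem card_le_div_add_one_of_modEq {S : Finset ℕ} {X L : ℕ} (hle : ∀ x ∈ S, x ≤ X)
    (hmod : ∀ x ∈ S, ∀ x' ∈ S, x ≡ x' [MOD L]) : #S ≤ X / L + 1 := by
  have hmaps : Set.MapsTo (· / L) S (range (X / L + 1)) := fun x hx =>
    mem_range.2 (Nat.lt_succ_of_le (Nat.div_le_div_right (hle x hx)))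
  have hinj : Set.InjOn (· / L) S := fun x hx x' hx' hq => by
    rw [← Nat.div_add_mod x L, ← Nat.div_add_mod x' L, hmod x hx x' hx',
      show x / L = x' / L from hq]
  simpa using card_le_card_of_injOn _ hmaps hinj

theorem modEq_finset_lcm {ι : Type*} {s : Finset ι} {f : ι → ℕ} {x x' : ℕ}
    (h : ∀ i ∈ s, x ≡ x' [MOD f i]) : x ≡ x' [MOD s.lcm f] := by
  simp_rw [Nat.modEq_iff_dvd, Int.natCast_dvd] at h ⊢
  exact Finset.lcm_dvd h

theorem card_filter_forall_dvd_add_le {ι : Type*} [Fintype ι] (X : ℕ) (a t : ι → ℕ)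
    [DecidablePred fun x => ∀ i, a i ∣ x + t i] :
    #{x ∈ Icc 1 X | ∀ i, a i ∣ x + t i} ≤ X / univ.lcm a + 1 := by
  refine card_le_div_add_one_of_modEq (fun x hx => (mem_Icc.1 (mem_filter.1 hx).1).2)
    fun x hx x' hx' => modEq_finset_lcm fun i _ => ?_
  have h := (mem_filter.1 hx).2 i
  have h' := (mem_filter.1 hx').2 i
  exact ((Nat.modEq_zero_iff_dvd.2 h).trans (Nat.modEq_zero_iff_dvd.2 h').symm).add_right_cancel' _

theorem exists_dvd_and_prod_eq_of_dvd_prod {ι : Type*} [DecidableEq ι] {f : ι → ℕ}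
    (s : Finset ι) {n : ℕ} (h : n ∣ ∏ i ∈ s, f i) :
    ∃ g : ι → ℕ, (∀ i ∈ s, g i ∣ f i) ∧ ∏ i ∈ s, g i = n := by
  induction s using Finset.induction_on generalizing n with
  | empty => exact ⟨fun _ => 1, by simp, by simpa using (Nat.dvd_one.1 h).symm⟩
  | insert j s hj ih =>
    rw [prod_insert hj] at h
    obtain ⟨d, e, hd, he, rfl⟩ := exists_dvd_and_dvd_of_dvd_mul h
    obtain ⟨g, hg, rfl⟩ := ih he
    refine ⟨Function.update g j d, fun i hi => ?_, ?_⟩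
    · rcases eq_or_ne i j with rfl | hij
      · simpa using hd
      · simpa [hij] using hg i ((mem_insert.1 hi).resolve_left hij)
    · rw [prod_insert hj, prod_update_of_notMem hj, Function.update_self]

theorem card_finMulAntidiag_le_of_dvd {k m n : ℕ} (hk : k ≠ 0) (hmn : m ∣ n) (hn : n ≠ 0) :
    #(finMulAntidiag k m) ≤ #(finMulAntidiag k n) := by
  obtain ⟨c, rfl⟩ := hmn
  have hc : c ≠ 0 := right_ne_zero_of_mul hn
  let i₀ : Fin k := ⟨0, Nat.pos_of_ne_zero hk⟩
  have hpos : ∀ i, (Pi.mulSingle i₀ c : Fin k → ℕ) i ≠ 0 := fun i => by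
    rcases eq_or_ne i i₀ with rfl | hi <;> simp [*]
  refine card_le_card_of_injOn (· * Pi.mulSingle i₀ c) (fun f hf => ?_) fun f _ f' _ e =>
    funext fun i => Nat.eq_of_mul_eq_mul_right (Nat.pos_of_ne_zero (hpos i)) (congrFun e i)
  simp only [mem_coe, mem_finMulAntidiag] at hf ⊢
  refine ⟨?_, hn⟩
  rw [Pi.mul_def, prod_mul_distrib, hf.1, prod_pi_mulSingle' i₀ c univ]
  simp

end Nat

theorem Int.card_filter_dvd_ne_zero_Icc_le (H b : ℕ) :
    #{h ∈ Icc (-(H : ℤ)) H | (b : ℤ) ∣ h ∧ h ≠ 0} ≤ 2 * (H / b) := by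
  set P := {n ∈ Ioc 0 H | b ∣ n}
  have hsub : {h ∈ Icc (-(H : ℤ)) H | (b : ℤ) ∣ h ∧ h ≠ 0} ⊆
      P.image (fun n : ℕ => (n : ℤ)) ∪ P.image (fun n : ℕ => -(n : ℤ)) := by
    intro h hh
    obtain ⟨hH, hb, h0⟩ := by simpa only [mem_filter, mem_Icc] using hh
    have hP : h.natAbs ∈ P := by
      simp only [P, mem_filter, mem_Ioc]
      exact ⟨⟨Int.natAbs_pos.2 h0, by omega⟩, Int.natCast_dvd.1 hb⟩
    rcases Int.natAbs_eq h with e | e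
    · exact mem_union_left _ (mem_image.2 ⟨_, hP, e.symm⟩)
    · exact mem_union_right _ (mem_image.2 ⟨_, hP, e.symm⟩)
  calc _ ≤ _ := card_le_card hsub
    _ ≤ #P + #P := (card_union_le _ _).trans (add_le_add card_image_le card_image_le)
    _ = 2 * (H / b) := by rw [Nat.Ioc_filter_dvd_card_eq_div]; ring

theorem tauNat_eq_card_finMulAntidiag (k n : ℕ) : tauNat k n = #(Nat.finMulAntidiag k n) := by
  rw [tauNat, ← Nat.card_eq_finsetCard]
  refine Nat.card_congr (Equiv.subtypeEquivRight fun d => ?_)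
  rw [Nat.mem_finMulAntidiag]
  constructor
  · rintro ⟨hpos, rfl⟩
    exact ⟨rfl, (prod_pos fun i _ => hpos i).ne'⟩
  · rintro ⟨rfl, hn⟩
    exact ⟨fun i => Nat.pos_of_ne_zero (prod_ne_zero_iff.1 hn i (mem_univ i)), rfl⟩

def factorPairs (k n : ℕ) : Finset ((Fin k → ℕ) × (Fin k → ℕ)) :=
  (Nat.finMulAntidiag 2 n).biUnion fun d =>
    Nat.finMulAntidiag k (d 0) ×ˢ Nat.finMulAntidiag k (d 1)

theorem mem_factorPairs {k n : ℕ} {p : (Fin k → ℕ) × (Fin k → ℕ)} :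
    p ∈ factorPairs k n ↔ (∏ i, p.1 i) * ∏ i, p.2 i = n ∧ n ≠ 0 := by
  simp only [factorPairs, mem_biUnion, mem_product, Nat.mem_finMulAntidiag, Fin.prod_univ_two]
  constructor
  · rintro ⟨d, ⟨hd, hn⟩, ⟨h0, -⟩, ⟨h1, -⟩⟩
    exact ⟨h0 ▸ h1 ▸ hd, hn⟩
  · rintro ⟨hd, hn⟩
    have h : (∏ i, p.1 i) * ∏ i, p.2 i ≠ 0 := hd ▸ hn
    exact ⟨![∏ i, p.1 i, ∏ i, p.2 i], ⟨by simpa using hd, hn⟩,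
      ⟨rfl, left_ne_zero_of_mul h⟩, ⟨rfl, right_ne_zero_of_mul h⟩⟩

theorem card_factorPairs_le {k : ℕ} (hk : k ≠ 0) (n : ℕ) :
    #(factorPairs k n) ≤ tauNat 2 n * tauNat k n ^ 2 := by
  rw [tauNat_eq_card_finMulAntidiag, tauNat_eq_card_finMulAntidiag]
  calc #(factorPairs k n)
      ≤ ∑ d ∈ Nat.finMulAntidiag 2 n,
          #(Nat.finMulAntidiag k (d 0)) * #(Nat.finMulAntidiag k (d 1)) := by
        exact card_biUnion_le.trans_eq (sum_congr rfl fun _ _ => card_product _ _)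
    _ ≤ ∑ _d ∈ Nat.finMulAntidiag 2 n, #(Nat.finMulAntidiag k n) ^ 2 := by
        refine sum_le_sum fun d hd => ?_
        have hn := (Nat.mem_finMulAntidiag.1 hd).2
        rw [sq]
        exact Nat.mul_le_mul
          (Nat.card_finMulAntidiag_le_of_dvd hk (Nat.dvd_of_mem_finMulAntidiag hd 0) hn)
          (Nat.card_finMulAntidiag_le_of_dvd hk (Nat.dvd_of_mem_finMulAntidiag hd 1) hn)
    _ = _ := by rw [sum_const, smul_eq_mul]

theorem radk_pos {k n : ℕ} {d : Fin k → ℕ} (hd : ∀ i, 0 < d i) (hprod : ∏ i, d i = n) :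
    0 < radk k n := by
  unfold radk
  obtain ⟨d', hd', -, h⟩ := Nat.sInf_mem (s := {m | ∃ d : Fin k → ℕ, (∀ i, 0 < d i) ∧
    ∏ i, d i = n ∧ univ.lcm d = m}) ⟨_, d, hd, hprod, rfl⟩
  rw [← h, Nat.pos_iff_ne_zero, Ne, Finset.lcm_eq_zero_iff]
  simpa using fun i => (hd' i).ne'

theorem radk_le_lcm {k n : ℕ} {d : Fin k → ℕ} (hd : ∀ i, 0 < d i) (hprod : ∏ i, d i = n) :
    radk k n ≤ univ.lcm d := by
  unfold radk
  exact Nat.sInf_le ⟨d, hd, hprod, rfl⟩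

theorem pos_of_mem_factorPairs {k n : ℕ} {p : (Fin k → ℕ) × (Fin k → ℕ)}
    (hp : p ∈ factorPairs k n) : (∀ i, 0 < p.1 i) ∧ ∀ i, 0 < p.2 i := by
  obtain ⟨hprod, hn⟩ := mem_factorPairs.1 hp
  rw [← hprod, mul_ne_zero_iff, prod_ne_zero_iff, prod_ne_zero_iff] at hn
  exact ⟨fun i => Nat.pos_of_ne_zero (hn.1 i (mem_univ i)),
    fun i => Nat.pos_of_ne_zero (hn.2 i (mem_univ i))⟩

theorem prod_mul_of_mem_factorPairs {k n : ℕ} {p : (Fin k → ℕ) × (Fin k → ℕ)}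
    (hp : p ∈ factorPairs k n) : ∏ i, (p.1 * p.2) i = n := by
  rw [Pi.mul_def, prod_mul_distrib, (mem_factorPairs.1 hp).1]

theorem radk_le_lcm_mul_prod {k n : ℕ} {p : (Fin k → ℕ) × (Fin k → ℕ)}
    (hp : p ∈ factorPairs k n) : radk k n ≤ univ.lcm p.1 * ∏ i, p.2 i := by
  obtain ⟨ha, hb⟩ := pos_of_mem_factorPairs hp
  refine (radk_le_lcm (fun i => Nat.mul_pos (ha i) (hb i)) (prod_mul_of_mem_factorPairs hp)).trans
    (Nat.le_of_dvd ?_ ?_)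
  · exact Nat.mul_pos (Nat.pos_of_ne_zero (by simpa [Finset.lcm_eq_zero_iff] using
      fun i => (ha i).ne')) (prod_pos fun i _ => hb i)
  · exact Finset.lcm_dvd fun i _ =>
      mul_dvd_mul (Finset.dvd_lcm (mem_univ i)) (dvd_prod_of_mem p.2 (mem_univ i))

theorem radk_pos_of_mem_factorPairs {k n : ℕ} {p : (Fin k → ℕ) × (Fin k → ℕ)}
    (hp : p ∈ factorPairs k n) : 0 < radk k n := by
  obtain ⟨ha, hb⟩ := pos_of_mem_factorPairs hp
  exact radk_pos (fun i => Nat.mul_pos (ha i) (hb i)) (prod_mul_of_mem_factorPairs hp)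

theorem prod_two_mul_div_mul_prod_le (H : ℕ) {k : ℕ} (b : Fin k → ℕ) :
    (∏ i, 2 * (H / b i)) * ∏ i, b i ≤ 2 ^ k * H ^ k := by
  calc (∏ i, 2 * (H / b i)) * ∏ i, b i = ∏ i, 2 * (H / b i * b i) := by
        rw [← prod_mul_distrib]; simp only [mul_assoc]
    _ ≤ ∏ _i : Fin k, 2 * H :=
        prod_le_prod' fun i _ => Nat.mul_le_mul_left 2 (Nat.div_mul_le_self H (b i))
    _ = 2 ^ k * H ^ k := by simp [mul_pow]

theorem cast_div_lcm_add_one_mul_prod_le {k n : ℕ} {p : (Fin k → ℕ) × (Fin k → ℕ)}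
    (hp : p ∈ factorPairs k n) (X H : ℕ) :
    (((X / univ.lcm p.1 + 1) * ∏ i, 2 * (H / p.2 i) : ℕ) : ℝ) ≤
      2 ^ k * (H : ℝ) ^ k * (1 + (X : ℝ) / radk k n) := by
  set L := univ.lcm p.1
  set B := ∏ i, p.2 i
  set P := ∏ i, 2 * (H / p.2 i)
  have hrad : (0 : ℝ) < radk k n := by exact_mod_cast radk_pos_of_mem_factorPairs hp
  have hLB : (radk k n : ℝ) ≤ L * B := by exact_mod_cast radk_le_lcm_mul_prod hp
  have hB : (1 : ℝ) ≤ B := by exact_mod_cast prod_pos fun i _ => (pos_of_mem_factorPairs hp).2 i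
  have hL : (0 : ℝ) < L := pos_of_mul_pos_left (hrad.trans_le hLB) (by positivity)
  have hPB : (P : ℝ) * B ≤ 2 ^ k * H ^ k := by exact_mod_cast prod_two_mul_div_mul_prod_le H p.2
  calc (((X / L + 1) * P : ℕ) : ℝ) ≤ ((X : ℝ) / L + 1) * P := by
        push_cast; gcongr; exact Nat.cast_div_le
    _ = ((X : ℝ) / (L * B) + 1 / B) * (P * B) := by field_simp
    _ ≤ ((X : ℝ) / radk k n + 1) * (2 ^ k * H ^ k) := by
        gcongr
        exact div_le_one_of_le₀ hB (by positivity)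
    _ = 2 ^ k * (H : ℝ) ^ k * (1 + (X : ℝ) / radk k n) := by ring

noncomputable def BkCover (k X H y : ℕ) : Finset (ℕ × (Fin k → ℕ) × (Fin k → ℤ)) :=
  (factorPairs k y ×ˢ Fintype.piFinset fun _ => Icc 1 H).biUnion fun q =>
    {x ∈ Icc 1 X | ∀ i, q.1.1 i ∣ x + q.2 i} ×ˢ {q.2} ×ˢ
      Fintype.piFinset fun i => {h ∈ Icc (-(H : ℤ)) H | (q.1.2 i : ℤ) ∣ h ∧ h ≠ 0}

theorem card_BkCover_le (k X H y : ℕ) :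
    #(BkCover k X H y) ≤
      ∑ p ∈ factorPairs k y, H ^ k * ((X / univ.lcm p.1 + 1) * ∏ i, 2 * (H / p.2 i)) := by
  calc #(BkCover k X H y)
      ≤ ∑ q ∈ factorPairs k y ×ˢ Fintype.piFinset (fun _ : Fin k => Icc 1 H),
          (X / univ.lcm q.1.1 + 1) * ∏ i, 2 * (H / q.1.2 i) := by
        refine card_biUnion_le.trans (sum_le_sum fun q _ => ?_)
        rw [card_product, card_product, card_singleton, one_mul, Fintype.card_piFinset]
        exact Nat.mul_le_mul (Nat.card_filter_forall_dvd_add_le X _ _)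
          (prod_le_prod' fun i _ => Int.card_filter_dvd_ne_zero_Icc_le H _)
    _ = _ := by
        rw [sum_product]
        simp [Fintype.card_piFinset]

theorem mem_BkCover {k X H y : ℕ} (hy : y ≠ 0) {s : ℕ × (Fin k → ℕ) × (Fin k → ℤ)}
    (hs : s.1 ∈ Icc 1 X ∧ (∀ i, s.2.1 i ∈ Icc 1 H) ∧
      (∀ i, s.2.2 i ∈ Icc (-(H : ℤ)) H) ∧
      (y : ℤ) ∣ (∏ i, ((s.1 : ℤ) + s.2.1 i)) * ∏ i, s.2.2 i ∧ (∏ i, s.2.2 i) ≠ 0) :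
    s ∈ BkCover k X H y := by
  obtain ⟨x, t, h⟩ := s
  obtain ⟨hx, ht, hh, hdvd, hne⟩ := hs
  have hdvd' : y ∣ (∏ i, (x + t i)) * ∏ i, (h i).natAbs := by
    have h' := Int.natAbs_dvd_natAbs.2 hdvd
    simp only [Int.natAbs_natCast, Int.natAbs_mul, ← Nat.cast_add, ← Nat.cast_prod] at h'
    rwa [show (∏ i, h i).natAbs = ∏ i, (h i).natAbs from map_prod Int.natAbsHom h univ] at h'
  obtain ⟨A, B, hA, hB, rfl⟩ := exists_dvd_and_dvd_of_dvd_mul hdvd'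
  obtain ⟨a, ha, rfl⟩ := Nat.exists_dvd_and_prod_eq_of_dvd_prod univ hA
  obtain ⟨b, hb, rfl⟩ := Nat.exists_dvd_and_prod_eq_of_dvd_prod univ hB
  simp only [BkCover, mem_biUnion, mem_product, mem_filter, mem_singleton, Fintype.mem_piFinset]
  exact ⟨((a, b), t), ⟨mem_factorPairs.2 ⟨rfl, hy⟩, ht⟩, ⟨hx, fun i => ha i (mem_univ i)⟩,
    rfl, fun i => ⟨hh i, Int.natCast_dvd.2 (hb i (mem_univ i)),
      fun h0 => hne (prod_eq_zero (mem_univ i) h0)⟩⟩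

theorem BkCount_le_card_BkCover {k X H y : ℕ} (hy : y ≠ 0) :
    BkCount k X H y ≤ #(BkCover k X H y) := by
  rw [BkCount, ← Nat.card_eq_finsetCard]
  exact Nat.card_le_card_of_injective (fun s => ⟨s.1, mem_BkCover hy s.2⟩)
    fun s s' h => Subtype.ext (congrArg Subtype.val h :)

/-- for every `k ≥ 1` there is `C_k > 0` such that for all integers
`y, X, H ≥ 1`, `#B_k(X, H; y) ≤ C_k · H^{2k} · τ₂(y)·τ_k(y)² · (1 + X / rad_k(y))`. -/
theorem stmt14 (k : ℕ) (hk : 1 ≤ k) :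
    ∃ C : ℝ, 0 < C ∧ ∀ y X H : ℕ, 1 ≤ y → 1 ≤ X → 1 ≤ H →
      (BkCount k X H y : ℝ) ≤
        C * (H : ℝ) ^ (2 * k) * (tauNat 2 y : ℝ) * (tauNat k y : ℝ) ^ 2 *
          (1 + (X : ℝ) / (radk k y : ℝ)) := by
  refine ⟨2 ^ k, by positivity, fun y X H hy _ _ => ?_⟩
  set R : ℝ := 1 + (X : ℝ) / radk k y
  have hcount := (BkCount_le_card_BkCover (X := X) (H := H) (k := k) (by omega)).trans
    (card_BkCover_le k X H y)
  have hpairs : (#(factorPairs k y) : ℝ) ≤ tauNat 2 y * tauNat k y ^ 2 := by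
    exact_mod_cast card_factorPairs_le (by omega) y
  calc (BkCount k X H y : ℝ)
      ≤ ∑ p ∈ factorPairs k y,
          (H : ℝ) ^ k * ((X / univ.lcm p.1 + 1) * ∏ i, 2 * (H / p.2 i) : ℕ) := by
        exact_mod_cast hcount
    _ ≤ ∑ _p ∈ factorPairs k y, (H : ℝ) ^ k * (2 ^ k * (H : ℝ) ^ k * R) :=
        sum_le_sum fun p hp => by gcongr; exact cast_div_lcm_add_one_mul_prod_le hp X H
    _ = #(factorPairs k y) * (2 ^ k * (H : ℝ) ^ (2 * k) * R) := by
        rw [sum_const, nsmul_eq_mul]; ring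
    _ ≤ tauNat 2 y * tauNat k y ^ 2 * (2 ^ k * (H : ℝ) ^ (2 * k) * R) := by gcongr
    _ = _ := by ring
end
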